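/- arXiv:2603.04014 — 11 statements merged into one kernel-verified Lean document; each statement's English description precedes it below -/
import Mathlib

section
/- Let ⟨A, ·, k, s⟩ be a combinatory algebra and let 𝒫 be a collection of subsets of A with ∅ ∈ 𝒫 and A ∈ 𝒫. For all t, q ∈ A, the set {a ∈ A | ∀ F : A → 𝒫(A), (∀ w ∈ A, F(w) ∈ 𝒫) → ∀ b ∈ F(t), a·b ∈ F(q)} (the interpretation of the Leibniz equality t =_σ q in a polyset model) is nonempty if and only if t = q. -/
/-- A combinatory algebra: a set `A` with a binary operation and combinators `k`, `s`. -/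
structure CombAlg (A : Type*) where
  op : A → A → A
  k : A
  s : A
  k_eq : ∀ a b : A, op (op k a) b = a
  s_eq : ∀ a b c : A, op (op (op s a) b) c = op (op a c) (op b c)

/-- In a polyset model over a combinatory algebra (with `∅` and `A` among the polysets),
the interpretation of the Leibniz equality `t =_σ q` is nonempty iff `t = q`. -/
theorem leibniz_interp_nonempty_iff {A : Type*} (𝒜 : CombAlg A)
    (P : Set (Set A)) (hempty : (∅ : Set A) ∈ P) (huniv : (Set.univ : Set A) ∈ P)
    (t q : A) :
    {a : A | ∀ F : A → Set A, (∀ w : A, F w ∈ P) →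
      ∀ b ∈ F t, 𝒜.op a b ∈ F q}.Nonempty ↔ t = q := by
  constructor
  · rintro ⟨a, ha⟩
    by_contra hne
    classical
    have := ha (fun w => if w = t then Set.univ else ∅)
      (fun w => by split <;> assumption)
      a (by simp)
    simp [Ne.symm hne] at this
  · rintro rfl
    refine ⟨𝒜.op (𝒜.op 𝒜.s 𝒜.k) 𝒜.k, fun F _ b hb => ?_⟩
    have : 𝒜.op (𝒜.op (𝒜.op 𝒜.s 𝒜.k) 𝒜.k) b = b := by
      rw [𝒜.s_eq, 𝒜.k_eq]
    rwa [this]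
end

section
/- Let ⟨A, ·, k, s⟩ be a combinatory algebra and let C ⊆ A be a subset such that for all a, b ∈ A, if a·b ∈ C then a ∈ C. Then the collection 𝒫 := {X ⊆ A | X ⊆ C ∨ X = A} is a polyset structure over A: it contains A and ∅, it is closed under arbitrary intersections, and it is closed under dependent products. -/
/-- The power polyset structure of `C`: all subsets of `C` together with the full set. -/
def powerPolyset {A : Type*} (C : Set A) : Set (Set A) :=
  {X | X ⊆ C ∨ X = Set.univ}

/-- If `C ⊆ A` satisfies `a·b ∈ C → a ∈ C`, then the power polyset structure of `C`
is a polyset structure: it contains `A` and `∅`, is closed under arbitrary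
intersections, and is closed under dependent products. -/
theorem powerPolyset_isPolysetStructure {A : Type*} (𝒜 : CombAlg A) (C : Set A)
    (hC : ∀ a b : A, 𝒜.op a b ∈ C → a ∈ C) :
    (Set.univ : Set A) ∈ powerPolyset C ∧
    (∅ : Set A) ∈ powerPolyset C ∧
    (∀ S : Set (Set A), S ⊆ powerPolyset C → ⋂₀ S ∈ powerPolyset C) ∧
    (∀ X ∈ powerPolyset C, ∀ F : A → Set A, (∀ t ∈ X, F t ∈ powerPolyset C) →
      {a : A | ∀ t ∈ X, 𝒜.op a t ∈ F t} ∈ powerPolyset C) := by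
  refine ⟨Or.inr rfl, Or.inl (Set.empty_subset C), ?_, ?_⟩
  · intro S hS
    by_cases h : ∃ X ∈ S, X ⊆ C
    · obtain ⟨X, hXS, hXC⟩ := h
      exact Or.inl (fun a ha => hXC (ha X hXS))
    · push_neg at h
      refine Or.inr (Set.eq_univ_of_forall fun a => ?_)
      intro X hXS
      rcases hS hXS with h1 | h1
      · exact absurd h1 (h X hXS)
      · rw [h1]; trivial
  · intro X _ F hF
    by_cases h : ∃ t ∈ X, F t ⊆ C
    · obtain ⟨t, htX, htC⟩ := h
      exact Or.inl (fun a ha => hC a t (htC (ha t htX)))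
    · push_neg at h
      refine Or.inr (Set.eq_univ_of_forall fun a t htX => ?_)
      rcases hF t htX with h1 | h1
      · exact absurd h1 (h t htX)
      · rw [h1]; trivial
end

section
/- Let ⟨A, ·, k, s⟩ be a combinatory algebra with distinguished elements refl, J ∈ A satisfying ((J·t)·a·a)·refl = t·a for all t, a ∈ A. Then for every σ ⊆ A and every a ∈ σ, refl ∈ Id_σ(a, a). (This is the soundness of the refl rule for identity types in the polyset model 𝒫_refl.) -/
/-- The polyset structure generated from `{refl}`: the empty set together with all
subsets containing `refl`. -/
def Prefl {A : Type*} (refl : A) : Set (Set A) :=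
  {X | X = ∅ ∨ refl ∈ X}

/-- The interpretation of the identity type `a =^σ b` in the polyset model `𝒫_refl`. -/
def IdInterp {A : Type*} (𝒜 : CombAlg A) (refl J : A) (σ : Set A) (a b : A) : Set A :=
  {q : A | ∀ C : A → A → A → Set A, (∀ x y r : A, C x y r ∈ Prefl refl) →
    ∀ t : A, (∀ x ∈ σ, 𝒜.op t x ∈ C x x refl) →
      𝒜.op (𝒜.op (𝒜.op (𝒜.op J t) a) b) q ∈ C a b q}

/-- Soundness of the `refl` rule: for every type `σ` and every `a ∈ σ`,
`refl` inhabits the interpretation of the identity type `a =^σ a`. -/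
theorem refl_mem_IdInterp {A : Type*} (𝒜 : CombAlg A) (refl J : A)
    (hJ : ∀ t a : A, 𝒜.op (𝒜.op (𝒜.op (𝒜.op J t) a) a) refl = 𝒜.op t a)
    (σ : Set A) (a : A) (ha : a ∈ σ) :
    refl ∈ IdInterp 𝒜 refl J σ a a := by
  intro C hC t ht
  rw [hJ]
  exact ht a ha
end

section
/- Let ⟨A, ·, k, s⟩ be a combinatory algebra with distinguished elements refl, J ∈ A. Then for every σ ⊆ A and all a, b ∈ A with a ≠ b, the interpretation of the identity type is empty: Id_σ(a, b) = ∅. -/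
/-- If `a ≠ b` then the interpretation of the identity type `a =^σ b` is empty. -/
theorem IdInterp_eq_empty_of_ne {A : Type*} (𝒜 : CombAlg A) (refl J : A)
    (σ : Set A) (a b : A) (hab : a ≠ b) :
    IdInterp 𝒜 refl J σ a b = ∅ := by
  ext q
  simp only [Set.mem_empty_iff_false, iff_false]
  intro hq
  have := hq (fun x y _ => {z | x = y})
    (fun x y r => by
      by_cases h : x = y
      · exact Or.inr h
      · exact Or.inl (Set.eq_empty_iff_forall_notMem.mpr fun z hz => h hz))
    refl (fun x _ => rfl)
  exact hab this
end

section
/- Let ⟨A, ·, k, s⟩ be a combinatory algebra with distinguished elements refl, J ∈ A. Then for every σ ⊆ A, all a, b ∈ A, and every p ∈ Id_σ(a, b), we have p = refl. (This is uniqueness of identity proofs, UIP, in the polyset model 𝒫_refl: every inhabitant of an identity type is interpreted by refl.) -/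
/-- Uniqueness of identity proofs (UIP) in the polyset model `𝒫_refl`: every
inhabitant of an identity type is interpreted by `refl`. -/
theorem uip_IdInterp {A : Type*} (𝒜 : CombAlg A) (refl J : A)
    (σ : Set A) (a b : A) (p : A) (hp : p ∈ IdInterp 𝒜 refl J σ a b) :
    p = refl := by
  have h := hp (fun _ _ r => {_w : A | r = refl})
    (fun x y r => by
      by_cases h : r = refl
      · exact Or.inr h
      · exact Or.inl (Set.eq_empty_iff_forall_notMem.mpr fun w hw => h hw))
    refl (fun x _ => rfl)
  exact h
end

section
/- Let ⟨A, ·, k, s⟩ be a combinatory algebra, let 𝒫 be a collection of subsets of A with ∅ ∈ 𝒫 and A ∈ 𝒫, let N ⊆ A and z, suc ∈ A. Define Ind := {a ∈ A | ∀ F : A → 𝒫(A), (∀ w ∈ A, F(w) ∈ 𝒫) → ∀ b ∈ F(z), ∀ c ∈ A, (∀ y ∈ N, ∀ d ∈ F(y), (c·y)·d ∈ F(suc·y)) → ∀ x ∈ N, ((a·b)·c)·x ∈ F(x)} (the interpretation of the induction principle ΠP:N→⋆. P z → (Πy:N. P y → P (suc y)) → Πx:N. P x). If Ind is nonempty, then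 every x ∈ N is a numeral: x = suc^n·z for some n ∈ ℕ, where suc^0·z := z and suc^{n+1}·z := suc·(suc^n·z). -/
/-- The numeral `suc^n · z` in a combinatory algebra. -/
def iterSuc {A : Type*} (𝒜 : CombAlg A) (suc z : A) : ℕ → A
  | 0 => z
  | n + 1 => 𝒜.op suc (iterSuc 𝒜 suc z n)

/-- If the interpretation of the induction principle
`ΠP:N→⋆. P z → (Πy:N. P y → P (suc y)) → Πx:N. P x` is nonempty in a polyset model
containing `∅` and `A`, then every element of `N` is a numeral `suc^n · z`. -/
theorem induction_nonempty_imp_numerals {A : Type*} (𝒜 : CombAlg A)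
    (P : Set (Set A)) (hempty : (∅ : Set A) ∈ P) (huniv : (Set.univ : Set A) ∈ P)
    (N : Set A) (z suc : A)
    (hInd : {a : A | ∀ F : A → Set A, (∀ w : A, F w ∈ P) →
      ∀ b ∈ F z, ∀ c : A,
        (∀ y ∈ N, ∀ d ∈ F y, 𝒜.op (𝒜.op c y) d ∈ F (𝒜.op suc y)) →
        ∀ x ∈ N, 𝒜.op (𝒜.op (𝒜.op a b) c) x ∈ F x}.Nonempty) :
    ∀ x ∈ N, ∃ n : ℕ, x = iterSuc 𝒜 suc z n := by
  classical
  obtain ⟨a, ha⟩ := hInd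
  intro x hx
  set F : A → Set A := fun w =>
    if ∃ n : ℕ, w = iterSuc 𝒜 suc z n then Set.univ else ∅ with hF
  have hFP : ∀ w : A, F w ∈ P := by
    intro w; simp only [hF]; split <;> assumption
  have hbz : 𝒜.k ∈ F z := by
    simp only [hF]
    rw [if_pos ⟨0, rfl⟩]; trivial
  have hc : ∀ y ∈ N, ∀ d ∈ F y, 𝒜.op (𝒜.op 𝒜.k y) d ∈ F (𝒜.op suc y) := by
    intro y _ d hd
    simp only [hF] at hd ⊢
    by_cases h : ∃ n : ℕ, y = iterSuc 𝒜 suc z n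
    · obtain ⟨n, rfl⟩ := h
      rw [if_pos ⟨n + 1, rfl⟩]; trivial
    · rw [if_neg h] at hd; exact absurd hd (Set.notMem_empty d)
  have := ha F hFP 𝒜.k hbz 𝒜.k hc x hx
  simp only [hF] at this
  by_cases h : ∃ n : ℕ, x = iterSuc 𝒜 suc z n
  · exact h
  · rw [if_neg h] at this; exact absurd this (Set.notMem_empty _)
end

section
/- Let ⟨A, ·, k, s⟩ be a combinatory algebra with a distinguished element refl ∈ A satisfying refl·a = refl for all a ∈ A. Define nat' := {a ∈ A | ∀ X ∈ 𝒫_refl, ∀ x ∈ X, ∀ f ∈ A, (∀ y ∈ X, f·y ∈ X) → (a·x)·f ∈ X}, and for z, suc ∈ A define Ind := {a ∈ A | ∀ F : A → 𝒫(A), (∀ w ∈ A, F(w) ∈ 𝒫_refl) → ∀ b ∈ F(z), ∀ c ∈ A, (∀ y ∈ nat', ∀ d ∈ F(y), (c·y)·d ∈ F(suc·y)) → ∀ x ∈ nat', ((a·b)·c)·x ∈ F(x)} (the interpretation of the induction principle for nat' in the polyset model 𝒫_refl). If Ind is nonempty, then refl = suc^n·z for some n ∈ ℕ, where suc^0·z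 := z and suc^{n+1}·z := suc·(suc^n·z). In particular, if refl is not of the form suc^n·z for any n, then induction fails in the model 𝒫_refl. -/
/-- The interpretation of the type of polymorphic Church numerals
`Πα:⋆. α → (α → α) → α` in the polyset model `𝒫_refl`. -/
def natInterp {A : Type*} (𝒜 : CombAlg A) (refl : A) : Set A :=
  {a : A | ∀ X ∈ Prefl refl, ∀ x ∈ X, ∀ f : A,
    (∀ y ∈ X, 𝒜.op f y ∈ X) → 𝒜.op (𝒜.op a x) f ∈ X}

/-- If `refl·a = refl` for all `a`, and the interpretation of the induction
principle for the Church numerals `nat'` is nonempty in the polyset model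
`𝒫_refl`, then `refl` itself must be a numeral `suc^n · z`. In particular, if
`refl` is not a numeral, induction fails in the model `𝒫_refl`. -/
theorem induction_nonempty_imp_refl_numeral {A : Type*} (𝒜 : CombAlg A)
    (refl : A) (hrefl : ∀ a : A, 𝒜.op refl a = refl) (z suc : A)
    (hInd : {a : A | ∀ F : A → Set A, (∀ w : A, F w ∈ Prefl refl) →
      ∀ b ∈ F z, ∀ c : A,
        (∀ y ∈ natInterp 𝒜 refl, ∀ d ∈ F y, 𝒜.op (𝒜.op c y) d ∈ F (𝒜.op suc y)) →
        ∀ x ∈ natInterp 𝒜 refl, 𝒜.op (𝒜.op (𝒜.op a b) c) x ∈ F x}.Nonempty) :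
    ∃ n : ℕ, refl = iterSuc 𝒜 suc z n := by
  obtain ⟨a, ha⟩ := hInd
  set F : A → Set A := fun w => {_v : A | ∃ n : ℕ, w = iterSuc 𝒜 suc z n} with hF
  have hFP : ∀ w : A, F w ∈ Prefl refl := by
    intro w
    by_cases h : ∃ n : ℕ, w = iterSuc 𝒜 suc z n
    · right; exact h
    · left; ext v; simp [hF, h]
  have hb : refl ∈ F z := ⟨0, rfl⟩
  have hc : ∀ y ∈ natInterp 𝒜 refl, ∀ d ∈ F y,
      𝒜.op (𝒜.op refl y) d ∈ F (𝒜.op suc y) := by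
    rintro y _ d ⟨n, rfl⟩
    exact ⟨n + 1, rfl⟩
  have hreflnat : refl ∈ natInterp 𝒜 refl := by
    intro X hX x hx f _
    rw [hrefl, hrefl]
    rcases hX with h | h
    · exact absurd (h ▸ hx) (Set.notMem_empty x)
    · exact h
  exact ha F hFP refl hb refl hc refl hreflnat
end

section
/- Let ⟨A, ·, k, s⟩ be a combinatory algebra, let 𝒫 be a collection of subsets of A with ∅ ∈ 𝒫 and A ∈ 𝒫, let B ⊆ A and t, f ∈ A. Define Ind_bool := {a ∈ A | ∀ F : A → 𝒫(A), (∀ w ∈ A, F(w) ∈ 𝒫) → ∀ b ∈ F(t), ∀ c ∈ F(f), ∀ x ∈ B, ((a·b)·c)·x ∈ F(x)} (the interpretation of the induction principle for booleans ΠP:B→⋆. P t → P f → Πx:B. P x). If Ind_bool is nonempty, then B ⊆ {t, f}. -/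
/-- If the interpretation of the induction principle for booleans
`ΠP:B→⋆. P t → P f → Πx:B. P x` is nonempty in a polyset model containing
`∅` and `A`, then `B ⊆ {t, f}`. -/
theorem bool_induction_nonempty_imp_subset {A : Type*} (𝒜 : CombAlg A)
    (P : Set (Set A)) (hempty : (∅ : Set A) ∈ P) (huniv : (Set.univ : Set A) ∈ P)
    (B : Set A) (t f : A)
    (hInd : {a : A | ∀ F : A → Set A, (∀ w : A, F w ∈ P) →
      ∀ b ∈ F t, ∀ c ∈ F f, ∀ x ∈ B,
        𝒜.op (𝒜.op (𝒜.op a b) c) x ∈ F x}.Nonempty) :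
    B ⊆ {t, f} := by
  obtain ⟨a, ha⟩ := hInd
  intro x hx
  by_contra hxtf
  simp only [Set.mem_insert_iff, Set.mem_singleton_iff, not_or] at hxtf
  classical
  set F : A → Set A := fun w => if w = t ∨ w = f then Set.univ else ∅ with hF
  have hFP : ∀ w, F w ∈ P := by
    intro w; simp only [hF]; split <;> assumption
  have hbt : a ∈ F t := by simp [hF]
  have hbf : a ∈ F f := by simp [hF]
  have := ha F hFP a hbt a hbf x hx
  simp [hF, hxtf.1, hxtf.2] at this
end

section
/- Let ⟨A, ·, k, s⟩ be a combinatory algebra containing two distinct elements u ≠ v, and let 𝒫 be a collection of subsets of A with ∅ ∈ 𝒫 and A ∈ 𝒫. Then there are no elements cls, r ∈ A such that (i) for all x, y ∈ A the set {a ∈ A | ∀ F : A → 𝒫(A), (∀ w ∈ A, F(w) ∈ 𝒫) → ∀ b ∈ F(cls·x), a·b ∈ F(cls·y)} (the interpretation of the Leibniz equality cls x = cls y) is nonempty, and (ii) r·(cls·u) = u and r·(cls·v) = v. (This is the counter-model argument showing that a parametric class function cls for quotient types, together with a lifting of the identity function along it, cannot exist; hence parametric quotient types are not definable in λP2.) 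-/
/-- Counter-model argument against parametric quotient types in λP2: in a
combinatory algebra with two distinct elements `u ≠ v` and a polyset model
containing `∅` and `A`, there are no elements `cls` and `r` such that the
interpretation of the Leibniz equality `cls x = cls y` is nonempty for all
`x, y`, while `r` lifts the identity along `cls` on `u` and `v`. -/
theorem no_parametric_quotients {A : Type*} (𝒜 : CombAlg A)
    (u v : A) (huv : u ≠ v)
    (P : Set (Set A)) (hempty : (∅ : Set A) ∈ P) (huniv : (Set.univ : Set A) ∈ P) :
    ¬ ∃ cls r : A,
      (∀ x y : A, {a : A | ∀ F : A → Set A, (∀ w : A, F w ∈ P) →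
        ∀ b ∈ F (𝒜.op cls x), 𝒜.op a b ∈ F (𝒜.op cls y)}.Nonempty) ∧
      𝒜.op r (𝒜.op cls u) = u ∧ 𝒜.op r (𝒜.op cls v) = v := by
  classical
  rintro ⟨cls, r, hne, hru, hrv⟩
  by_cases h : 𝒜.op cls u = 𝒜.op cls v
  · exact huv (hru ▸ hrv ▸ congrArg (𝒜.op r) h)
  · obtain ⟨a, ha⟩ := hne u v
    have := ha (fun w => if w = 𝒜.op cls u then Set.univ else ∅)
      (fun w => by split <;> assumption) (𝒜.op r (𝒜.op cls u))
    simp at this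
    exact h this.symm
end

section
/- Let ⟨A, ·, k, s⟩ be a combinatory algebra with distinguished elements refl, J ∈ A satisfying refl·a = refl and ((J·t)·a·a)·refl = t·a for all t, a ∈ A. Let f, g ∈ A with f ≠ g, and let σ, τ ⊆ A be such that for every x ∈ σ, f·x = g·x and f·x ∈ τ. Then refl ∈ {p ∈ A | ∀ x ∈ σ, p·x ∈ Id_τ(f·x, g·x)} (so the interpretation of Πx:σ. f x =^τ g x is nonempty), while Id_ρ(f, g) = ∅ for every ρ ⊆ A (so the interpretation of f = g is empty). Hence function extensionality fails in the polyset model 𝒫_refl whenever two distinct elements are pointwise equal on σ. -/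
/-- Failure of function extensionality in the polyset model `𝒫_refl`: if
`f ≠ g` but `f` and `g` agree pointwise on `σ` (with values in `τ`), then the
interpretation of `Πx:σ. f x =^τ g x` is inhabited (by `refl`) while the
interpretation of `f =^ρ g` is empty for every `ρ`. -/
theorem funext_fails {A : Type*} (𝒜 : CombAlg A) (refl J : A)
    (hrefl : ∀ a : A, 𝒜.op refl a = refl)
    (hJ : ∀ t a : A, 𝒜.op (𝒜.op (𝒜.op (𝒜.op J t) a) a) refl = 𝒜.op t a)
    (f g : A) (hfg : f ≠ g) (σ τ : Set A)
    (heq : ∀ x ∈ σ, 𝒜.op f x = 𝒜.op g x)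
    (hmem : ∀ x ∈ σ, 𝒜.op f x ∈ τ) :
    refl ∈ {p : A | ∀ x ∈ σ,
        𝒜.op p x ∈ IdInterp 𝒜 refl J τ (𝒜.op f x) (𝒜.op g x)} ∧
    ∀ ρ : Set A, IdInterp 𝒜 refl J ρ f g = ∅ := by
  constructor
  · intro x hx
    rw [hrefl x]
    intro C hC t ht
    rw [← heq x hx, hJ t (𝒜.op f x)]
    have := ht (𝒜.op f x) (hmem x hx)
    rw [heq x hx] at this ⊢
    exact this
  · intro ρ
    ext q
    simp only [Set.mem_empty_iff_false, iff_false]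
    intro hq
    classical
    have := hq (fun x y _ => if x = y then Set.univ else ∅)
      (fun x y r => by by_cases h : x = y <;> simp [h, Prefl]) refl
      (fun x _ => by simp)
    simp only [if_neg hfg] at this
    exact this
end

section
/- In the untyped λ-calculus, let K := λx.λy.x, K* := λx.λy.y, I := λx.x, and N := λb.((b K*) K). Then the two terms s₁ := λk.(((k K) N) N) and s₂ := λk.(((k K*) I) N) are not β-convertible: ¬(s₁ =_β s₂). (These are the interpretations of the two bisimilar but non-equal streams pack bool ⟨true, ¬, ¬⟩ and pack bool ⟨false, I, ¬⟩, showing the definable stream type in λP2 does not satisfy the coinduction principle.) -/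
/-- Untyped λ-terms with de Bruijn indices. -/
inductive Lam : Type
  | var : ℕ → Lam
  | app : Lam → Lam → Lam
  | lam : Lam → Lam
  deriving DecidableEq

namespace Lam

/-- Shift by one the free variables of index `≥ d`. -/
def lift (d : ℕ) : Lam → Lam
  | var n => if n < d then var n else var (n + 1)
  | app m n => app (lift d m) (lift d n)
  | lam m => lam (lift (d + 1) m)

/-- Substitution `m[j := n]` for de Bruijn terms. -/
def subst (m : Lam) (j : ℕ) (n : Lam) : Lam :=
  match m with
  | var i => if i = j then n else if j < i then var (i - 1) else var i
  | app p q => app (subst p j n) (subst q j n)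
  | lam b => lam (subst b (j + 1) (lift 0 n))

/-- One-step β-reduction: the compatible closure of `(λ.m) n → m[0 := n]`. -/
inductive Step : Lam → Lam → Prop
  | beta (m n : Lam) : Step (app (lam m) n) (subst m 0 n)
  | appLeft {m m' : Lam} (n : Lam) : Step m m' → Step (app m n) (app m' n)
  | appRight (m : Lam) {n n' : Lam} : Step n n' → Step (app m n) (app m n')
  | lam {m m' : Lam} : Step m m' → Step (lam m) (lam m')

/-- β-conversion: the reflexive, symmetric, transitive closure of one-step
β-reduction. -/
def BetaConv : Lam → Lam → Prop := Relation.EqvGen Step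

/-- `K = λx.λy.x`. -/
def K : Lam := lam (lam (var 1))

/-- `K* = λx.λy.y`. -/
def Kstar : Lam := lam (lam (var 0))

/-- `I = λx.x`. -/
def I : Lam := lam (var 0)

/-- `N = λb. (b K*) K`, the interpretation of boolean negation. -/
def N : Lam := lam (app (app (var 0) Kstar) K)

/-- `s₁ = λk. ((k K) N) N`, the interpretation of the stream
`pack bool ⟨true, ¬, ¬⟩`. -/
def s₁ : Lam := lam (app (app (app (var 0) K) N) N)

/-- `s₂ = λk. ((k K*) I) N`, the interpretation of the stream
`pack bool ⟨false, I, ¬⟩`. -/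
def s₂ : Lam := lam (app (app (app (var 0) Kstar) I) N)

end Lam


namespace Lam

theorem lift_lift (m : Lam) : ∀ i j, i ≤ j →
    lift i (lift j m) = lift (j + 1) (lift i m) := by
  induction m with
  | var n =>
    intro i j h
    simp only [lift]
    split_ifs <;> simp only [lift] <;> split_ifs <;>
      first
      | rfl
      | omega
      | (exact absurd rfl (by omega))
  | app p q ihp ihq => intro i j h; simp only [lift, ihp i j h, ihq i j h]
  | lam b ih =>
    intro i j h
    simp only [lift, ih (i + 1) (j + 1) (by omega)]

theorem lift_subst (m : Lam) : ∀ n i j, j ≤ i →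
    lift j (subst m i n) = subst (lift j m) (i + 1) (lift j n) := by
  induction m with
  | var k =>
    intro n i j h
    simp only [subst, lift]
    split_ifs <;> simp only [lift, subst] <;> split_ifs <;>
      first
      | rfl
      | omega
      | (congr 1; omega)
  | app p q ihp ihq => intro n i j h; simp only [lift, subst, ihp n i j h, ihq n i j h]
  | lam b ih =>
    intro n i j h
    simp only [lift, subst, ih (lift 0 n) (i + 1) (j + 1) (by omega)]
    rw [lift_lift n 0 j (by omega)]

theorem lift_subst_lt (m : Lam) : ∀ n i j, i ≤ j →
    lift j (subst m i n) = subst (lift (j + 1) m) i (lift j n) := by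
  induction m with
  | var k =>
    intro n i j h
    simp only [subst, lift]
    split_ifs <;> simp only [lift, subst] <;> split_ifs <;>
      first
      | rfl
      | omega
      | (congr 1; omega)
  | app p q ihp ihq => intro n i j h; simp only [lift, subst, ihp n i j h, ihq n i j h]
  | lam b ih =>
    intro n i j h
    simp only [lift, subst, ih (lift 0 n) (i + 1) (j + 1) (by omega)]
    rw [lift_lift n 0 j (by omega)]

theorem subst_lift (m : Lam) : ∀ i n, subst (lift i m) i n = m := by
  induction m with
  | var k =>
    intro i n
    simp only [lift]
    split_ifs <;> simp only [subst] <;> split_ifs <;>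
      first
      | rfl
      | omega
      | (congr 1; omega)
  | app p q ihp ihq => intro i n; simp only [lift, subst, ihp, ihq]
  | lam b ih => intro i n; simp only [lift, subst, ih]

theorem subst_subst (m : Lam) : ∀ i j n p, i ≤ j →
    subst (subst m i n) j p = subst (subst m (j + 1) (lift i p)) i (subst n j p) := by
  induction m with
  | var k =>
    intro i j n p h
    simp only [subst]
    split_ifs <;> (try simp only [subst]) <;> (try split_ifs) <;>
      first
      | rfl
      | omega
      | (congr 1; omega)
      | (exact (subst_lift p i (subst n j p)).symm)
  | app a b iha ihb => intro i j n p h; simp only [subst, iha _ _ _ _ h, ihb _ _ _ _ h]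
  | lam b ih =>
    intro i j n p h
    simp only [subst, ih (i + 1) (j + 1) (lift 0 n) (lift 0 p) (by omega)]
    rw [lift_lift p 0 i (by omega), lift_subst n p j 0 (by omega)]

/-- Parallel reduction. -/
inductive Par : Lam → Lam → Prop
  | var (n : ℕ) : Par (var n) (var n)
  | app {m m' n n' : Lam} : Par m m' → Par n n' → Par (app m n) (app m' n')
  | lam {m m' : Lam} : Par m m' → Par (lam m) (lam m')
  | beta {m m' n n' : Lam} : Par m m' → Par n n' →
      Par (app (lam m) n) (subst m' 0 n')

theorem Par.refl (m : Lam) : Par m m := by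
  induction m with
  | var n => exact Par.var n
  | app p q ihp ihq => exact Par.app ihp ihq
  | lam b ih => exact Par.lam ih

theorem Par.of_step {m n : Lam} (h : Step m n) : Par m n := by
  induction h with
  | beta m n => exact Par.beta (Par.refl m) (Par.refl n)
  | appLeft n _ ih => exact Par.app ih (Par.refl n)
  | appRight m _ ih => exact Par.app (Par.refl m) ih
  | lam _ ih => exact Par.lam ih

theorem Par.lift {m m' : Lam} (h : Par m m') : ∀ d, Par (lift d m) (lift d m') := by
  induction h with
  | var n => intro d; simp only [Lam.lift]; split_ifs <;> exact Par.refl _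
  | app _ _ ih1 ih2 => intro d; exact Par.app (ih1 d) (ih2 d)
  | lam _ ih => intro d; exact Par.lam (ih (d + 1))
  | @beta a a' b b' _ _ ih1 ih2 =>
    intro d
    have := Par.beta (ih1 (d + 1)) (ih2 d)
    simpa [Lam.lift, lift_subst_lt a' b' 0 d (by omega)] using this

theorem Par.subst {m m' : Lam} (h : Par m m') :
    ∀ j {n n' : Lam}, Par n n' → Par (subst m j n) (subst m' j n') := by
  induction h with
  | var k =>
    intro j n n' hn
    simp only [Lam.subst]
    split_ifs <;> first | exact hn | exact Par.refl _
  | app _ _ ih1 ih2 => intro j n n' hn; exact Par.app (ih1 j hn) (ih2 j hn)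
  | lam _ ih => intro j n n' hn; exact Par.lam (ih (j + 1) (hn.lift 0))
  | @beta a a' b b' _ _ ih1 ih2 =>
    intro j n n' hn
    have := Par.beta (ih1 (j + 1) (hn.lift 0)) (ih2 j hn)
    simpa [Lam.subst, subst_subst a' 0 j b' n' (by omega)] using this

/-- Complete development. -/
def cd : Lam → Lam
  | var n => var n
  | app (lam m) n => subst (cd m) 0 (cd n)
  | app (var k) n => app (cd (var k)) (cd n)
  | app (app p q) n => app (cd (app p q)) (cd n)
  | lam m => lam (cd m)

theorem Par.triangle {m n : Lam} (h : Par m n) : Par n (Lam.cd m) := by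
  induction h with
  | var n => exact Par.var n
  | @app a a' b b' ha hb ih1 ih2 =>
    match a, ha, ih1 with
    | Lam.var k, ha, ih1 => exact Par.app ih1 ih2
    | Lam.app p q, ha, ih1 => exact Par.app ih1 ih2
    | Lam.lam c, ha, ih1 =>
      cases ha with
      | lam hc =>
        cases ih1 with
        | lam ihc => exact Par.beta ihc ih2
  | lam _ ih => exact Par.lam ih
  | @beta a a' b b' _ _ ih1 ih2 =>
    show Par _ (Lam.cd (Lam.app (Lam.lam a) b))
    exact ih1.subst 0 ih2

theorem Par.diamond {a b c : Lam} (h1 : Par a b) (h2 : Par a c) :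
    ∃ d, Par b d ∧ Par c d :=
  ⟨Lam.cd a, h1.triangle, h2.triangle⟩

/-- A decidable normal-form check. -/
def isNormal : Lam → Bool
  | var _ => true
  | app (lam _) _ => false
  | app m n => isNormal m && isNormal n
  | lam m => isNormal m

theorem Par.eq_of_isNormal {m n : Lam} (h : Par m n) (hm : isNormal m = true) : n = m := by
  induction h with
  | var n => rfl
  | @app a a' b b' ha hb ih1 ih2 =>
    match a, ha, ih1 with
    | Lam.var k, ha, ih1 =>
      simp only [isNormal, Bool.true_and] at hm
      rw [ih1 rfl, ih2 hm]
    | Lam.app p q, ha, ih1 =>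
      simp only [isNormal, Bool.and_eq_true] at hm
      rw [ih1 hm.1, ih2 hm.2]
    | Lam.lam c, ha, ih1 => simp [isNormal] at hm
  | lam _ ih =>
    simp only [isNormal] at hm
    rw [ih hm]
  | beta _ _ _ _ => simp [isNormal] at hm

theorem eq_of_reflTransGen_par {m n : Lam} (h : Relation.ReflTransGen Par m n)
    (hm : isNormal m = true) : n = m := by
  induction h with
  | refl => rfl
  | tail _ hstep ih =>
    subst ih
    exact hstep.eq_of_isNormal hm

end Lam

/-- The interpretations of the two bisimilar streams `pack bool ⟨true, ¬, ¬⟩` and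
`pack bool ⟨false, I, ¬⟩` are not β-convertible, so the definable stream type in
λP2 does not satisfy the coinduction principle. -/
theorem s₁_not_betaConv_s₂ : ¬ Lam.BetaConv Lam.s₁ Lam.s₂ := by
  intro h
  have hpar : Relation.EqvGen Lam.Par Lam.s₁ Lam.s₂ :=
    h.mono fun _ _ hs => Lam.Par.of_step hs
  have hjoin : Relation.Join (Relation.ReflTransGen Lam.Par) Lam.s₁ Lam.s₂ := by
    have hequiv : Equivalence (Relation.Join (Relation.ReflTransGen Lam.Par)) :=
      Relation.equivalence_join_reflTransGen fun a b c h1 h2 => by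
        obtain ⟨d, hd1, hd2⟩ := Lam.Par.diamond h1 h2
        exact ⟨d, Relation.ReflGen.single hd1, Relation.ReflTransGen.single hd2⟩
    have := hpar.mono fun a b hab =>
      (⟨b, Relation.ReflTransGen.single hab, Relation.ReflTransGen.refl⟩ :
        Relation.Join (Relation.ReflTransGen Lam.Par) a b)
    exact hequiv.eqvGen_iff.mp this
  obtain ⟨t, h1, h2⟩ := hjoin
  have e1 : t = Lam.s₁ := Lam.eq_of_reflTransGen_par h1 (by decide)
  have e2 : t = Lam.s₂ := Lam.eq_of_reflTransGen_par h2 (by decide)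
  rw [e1] at e2
  exact absurd e2 (by decide)
end
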